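/- arXiv:2112.11595 — 5 statements merged into one kernel-verified Lean document; each statement's English description precedes it below -/
import Mathlib

section
/- Let g(0)≠0 and suppose f(z) = z·g(z^{2l+1}) is pseudo-involutory for some integer l≥0. Then h(z) = z·g(z)^{2l+1} is also pseudo-involutory, and conversely. -/
open PowerSeries

/-- Composition `f ∘ g` of formal power series (meaningful when the constant
coefficient of `g` is zero). -/
noncomputable def comp (f g : PowerSeries ℚ) : PowerSeries ℚ :=
  PowerSeries.mk fun n =>
    ∑ i ∈ Finset.range (n + 1), (PowerSeries.coeff i f) * (PowerSeries.coeff n (g ^ i))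

/-- A formal power series `f` is pseudo-involutory when its compositional
inverse is `-f(-z)`. -/
def PseudoInvolutory (f : PowerSeries ℚ) : Prop :=
  comp f (-(comp f (-X))) = X ∧ comp (-(comp f (-X))) f = X

/-!
Put `m = 2l + 1` and `P = z^m`, so that `P ∘ f = h ∘ P`. Such a relation is preserved under
composition, and, `P` being odd, under conjugation by `z ↦ -z`. Hence it relates
`f ∘ (-f(-z))` to `h ∘ (-h(-z))`, and likewise with the factors swapped. Finally, if
`P ∘ w = k ∘ P` with `w(0) = 0`, then `w = z` if and only if `k = z`: one direction is the
injectivity of `k ↦ k ∘ P`, the other is the uniqueness of odd roots, `w^m = z^m ⇒ w = z`.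
-/

namespace PowerSeries

variable {R : Type*} [CommRing R]

theorem subst_neg {a : R⟦X⟧} (ha : HasSubst a) (f : R⟦X⟧) :
    (-f).subst a = -f.subst a := by
  rw [← coe_substAlgHom ha, map_neg]

theorem subst_X_pow_injective {m : ℕ} (hm : m ≠ 0) :
    Function.Injective (subst (X ^ m : R⟦X⟧) : R⟦X⟧ → R⟦X⟧) := by
  intro f g h
  ext n
  simpa [hm] using congrArg (coeff (m * n)) h

theorem eq_one_of_pow_eq_one [IsDomain R] [CharZero R] {u : R⟦X⟧} {m : ℕ} (hm : m ≠ 0)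
    (hu : constantCoeff u = 1) (h : u ^ m = 1) : u = 1 := by
  have hsum : ∑ i ∈ Finset.range m, u ^ i ≠ 0 := fun h0 => by
    simpa [hu, hm] using congrArg constantCoeff h0
  have hgeom := geom_sum_mul u m
  rw [h, sub_self] at hgeom
  exact sub_eq_zero.mp ((mul_eq_zero.mp hgeom).resolve_left hsum)

theorem eq_X_of_pow_eq_X_pow [LinearOrder R] [IsStrictOrderedRing R] {w : R⟦X⟧} {m : ℕ}
    (hm : Odd m) (hw : constantCoeff w = 0) (h : w ^ m = X ^ m) : w = X := by
  obtain ⟨u, rfl⟩ := X_dvd_iff.mpr hw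
  have hum : u ^ m = 1 :=
    mul_left_cancel₀ (pow_ne_zero m X_ne_zero) (by rw [← mul_pow, h, mul_one])
  have hu : constantCoeff u = 1 := hm.pow_inj.mp (by rw [← map_pow, hum, map_one, one_pow])
  rw [eq_one_of_pow_eq_one hm.pos.ne' hu hum, mul_one]

end PowerSeries

theorem comp_eq_subst (f : ℚ⟦X⟧) {g : ℚ⟦X⟧} (hg : constantCoeff g = 0) :
    comp f g = f.subst g := by
  ext n
  rw [comp, coeff_mk, coeff_subst' (HasSubst.of_constantCoeff_zero' hg),
    finsum_eq_sum_of_support_subset _ (s := Finset.range (n + 1))]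
  · simp only [smul_eq_mul]
  · refine Function.support_subset_iff'.mpr fun d hd => ?_
    have hnd : (n : ℕ∞) < (g ^ d).order :=
      (show (n : ℕ∞) < d by simpa using hd).trans_le (le_order_pow_of_constantCoeff_eq_zero d hg)
    simp only [coeff_of_lt_order n hnd, smul_zero]

section

variable {R : Type*} [CommRing R]

/-- `z^m ∘ f = h ∘ z^m`. -/
def PowSemiconj (m : ℕ) (f h : R⟦X⟧) : Prop :=
  f ^ m = h.subst (X ^ m : R⟦X⟧)

noncomputable def negConj (f : R⟦X⟧) : R⟦X⟧ :=
  -f.subst (-X : R⟦X⟧)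

theorem constantCoeff_negConj {f : R⟦X⟧} (hf : constantCoeff f = 0) :
    constantCoeff (negConj f) = 0 := by
  have hX : constantCoeff (-X : R⟦X⟧) = 0 := by simp
  rw [negConj, map_neg, neg_eq_zero]
  exact constantCoeff_subst_eq_zero hX f hf

theorem powSemiconj_X_mul (g : R⟦X⟧) {m : ℕ} (hm : m ≠ 0) :
    PowSemiconj m (X * g.subst (X ^ m : R⟦X⟧)) (X * g ^ m) := by
  rw [PowSemiconj, subst_mul (.X_pow hm), subst_pow (.X_pow hm), subst_X (.X_pow hm), mul_pow]

theorem powSemiconj_neg_X {m : ℕ} (hm : Odd m) : PowSemiconj m (-X : R⟦X⟧) (-X) := by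
  rw [PowSemiconj, hm.neg_pow, subst_neg (.X_pow hm.pos.ne'), subst_X (.X_pow hm.pos.ne')]

namespace PowSemiconj

variable {m : ℕ} {f h f₂ h₂ : R⟦X⟧}

theorem comp (hm : m ≠ 0) (hfh : PowSemiconj m f h) (hfh₂ : PowSemiconj m f₂ h₂)
    (hf₂ : constantCoeff f₂ = 0) (hh₂ : constantCoeff h₂ = 0) :
    PowSemiconj m (f.subst f₂) (h.subst h₂) := by
  have hf₂' := HasSubst.of_constantCoeff_zero' hf₂
  have hh₂' := HasSubst.of_constantCoeff_zero' hh₂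
  have hXm : HasSubst (X ^ m : R⟦X⟧) := .X_pow hm
  unfold PowSemiconj at *
  rw [← subst_pow hf₂', hfh, subst_comp_subst_apply hXm hf₂', subst_pow hf₂', subst_X hf₂', hfh₂,
    subst_comp_subst_apply hh₂' hXm]

theorem neg (hm : Odd m) (hfh : PowSemiconj m f h) : PowSemiconj m (-f) (-h) := by
  rw [PowSemiconj, hm.neg_pow, hfh, subst_neg (.X_pow hm.pos.ne')]

theorem negConj (hm : Odd m) (hfh : PowSemiconj m f h) :
    PowSemiconj m (negConj f) (negConj h) :=
  (hfh.comp hm.pos.ne' (powSemiconj_neg_X hm) (by simp) (by simp)).neg hm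

theorem eq_X_iff [LinearOrder R] [IsStrictOrderedRing R] (hm : Odd m) (hf : constantCoeff f = 0)
    (hfh : PowSemiconj m f h) : f = X ↔ h = X := by
  constructor
  · rintro rfl
    exact subst_X_pow_injective hm.pos.ne' (by rw [← hfh, subst_X (.X_pow hm.pos.ne')])
  · rintro rfl
    exact eq_X_of_pow_eq_X_pow hm hf (by rw [hfh, subst_X (.X_pow hm.pos.ne')])

end PowSemiconj

end

theorem pseudoInvolutory_iff {f : ℚ⟦X⟧} (hf : constantCoeff f = 0) :
    PseudoInvolutory f ↔ f.subst (negConj f) = X ∧ (negConj f).subst f = X := by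
  have hX : constantCoeff (-X : ℚ⟦X⟧) = 0 := by simp
  rw [PseudoInvolutory, comp_eq_subst f hX, ← negConj,
    comp_eq_subst f (constantCoeff_negConj hf), comp_eq_subst _ hf]

theorem twin_powers_pseudo_involutory_general (g : PowerSeries ℚ) (l : ℕ) :
    PseudoInvolutory (X * comp g (X ^ (2 * l + 1))) ↔
      PseudoInvolutory (X * g ^ (2 * l + 1)) := by
  have hm : Odd (2 * l + 1) := odd_two_mul_add_one l
  have hXm : constantCoeff (X ^ (2 * l + 1) : ℚ⟦X⟧) = 0 := by simp
  rw [comp_eq_subst g hXm]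
  set f := X * g.subst (X ^ (2 * l + 1) : ℚ⟦X⟧)
  set h := X * g ^ (2 * l + 1)
  have hf : constantCoeff f = 0 := by simp [f]
  have hh : constantCoeff h = 0 := by simp [h]
  have hfh : PowSemiconj (2 * l + 1) f h := powSemiconj_X_mul g hm.pos.ne'
  have hFH := hfh.negConj hm
  have hF := constantCoeff_negConj hf
  have hH := constantCoeff_negConj hh
  rw [pseudoInvolutory_iff hf, pseudoInvolutory_iff hh]
  exact and_congr
    ((hfh.comp hm.pos.ne' hFH hF hH).eq_X_iff hm (constantCoeff_subst_eq_zero hF f hf))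
    ((hFH.comp hm.pos.ne' hfh hf hh).eq_X_iff hm (constantCoeff_subst_eq_zero hf _ hF))

/-- ("The Twin Powers Theorem", existence part.)  If `g(0) ≠ 0` then
`f(z) = z·g(z^{2l+1})` is pseudo-involutory if and only if
`h(z) = z·g(z)^{2l+1}` is pseudo-involutory. -/
theorem twin_powers_pseudo_involutory (g : PowerSeries ℚ) (l : ℕ)
    (hg0 : PowerSeries.constantCoeff g ≠ 0) :
    PseudoInvolutory (X * comp g (X ^ (2 * l + 1))) ↔
      PseudoInvolutory (X * g ^ (2 * l + 1)) :=
  twin_powers_pseudo_involutory_general g l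
end

section
/- For indeterminates u, v and all l ≥ 0: u^{2l+1} - v^{2l+1} = Σ_{j=0}^{l} a_{l,j}·(uv)^{l-j}·(u-v)^{2j+1}, where a_{l,j} = ((2l+1)/(2j+1))·C(l+j, 2j). -/
/-!
Put `w = -v`, `s = u - v = u + w` and `p = u * v = -(u * w)`. Then `L n = u ^ n + w ^ n` satisfies
the Lucas recurrence `L (n + 2) = s * L (n + 1) + p * L n`, so the coefficient of `p ^ i * s ^ m`
in `L (2 * i + m)` obeys Pascal's rule, with boundary values `2` for `m = 0` and `1` for
`i = 0 < m`. This identifies it as `C(i + m, m) + C(i + m - 1, m)`, which is `a_{i+j,j}` for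
`m = 2 * j + 1`. Splitting by the parity of `n` makes `L` a pair of homogeneous polynomials in `p`
and `s ^ 2`.
-/

open Finset

/-- The coefficient of `(u * v) ^ i * (u - v) ^ m` in `u ^ (2 * i + m) + (-v) ^ (2 * i + m)`.
At `i = m = 0` the truncated subtraction gives `2`, the right value. -/
def lucasCoeff (i m : ℕ) : ℕ := (i + m).choose m + (i + m - 1).choose m

lemma lucasCoeff_zero_right (i : ℕ) : lucasCoeff i 0 = 2 := by
  simp [lucasCoeff]

lemma lucasCoeff_zero_succ (m : ℕ) : lucasCoeff 0 (m + 1) = 1 := by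
  simp [lucasCoeff]

lemma lucasCoeff_succ_succ (i m : ℕ) :
    lucasCoeff (i + 1) (m + 1) = lucasCoeff (i + 1) m + lucasCoeff i (m + 1) := by
  unfold lucasCoeff
  rw [show i + 1 + (m + 1) = i + m + 1 + 1 by omega, show i + 1 + m = i + m + 1 by omega,
    show i + (m + 1) = i + m + 1 by omega]
  simp only [Nat.add_sub_cancel]
  rw [Nat.choose_succ_succ (i + m + 1) m, Nat.choose_succ_succ (i + m) m]
  ring

lemma succ_mul_lucasCoeff_succ (i m : ℕ) :
    (m + 1) * lucasCoeff i (m + 1) = (2 * i + m + 1) * (i + m).choose m := by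
  have h₁ := Nat.add_one_mul_choose_eq (i + m) m
  have h₂ := Nat.choose_succ_right_eq (i + m) m
  rw [Nat.add_sub_cancel] at h₂
  unfold lucasCoeff
  rw [show i + (m + 1) = i + m + 1 by omega, Nat.add_sub_cancel]
  linear_combination h₁.symm + h₂

lemma cast_lucasCoeff_sub_eq {l j : ℕ} (hj : j ≤ l) :
    (lucasCoeff (l - j) (2 * j + 1) : ℚ) =
      (2 * l + 1) / (2 * j + 1) * (l + j).choose (2 * j) := by
  have h := succ_mul_lucasCoeff_succ (l - j) (2 * j)
  rw [show l - j + 2 * j = l + j by omega,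
    show 2 * (l - j) + 2 * j + 1 = 2 * l + 1 by omega] at h
  rw [div_mul_eq_mul_div, eq_div_iff (by positivity), mul_comm]
  exact_mod_cast h

section HomogeneousSum

variable {R : Type*} [CommSemiring R]

def homogeneousSum (c : ℕ → ℕ → ℕ) (x y : R) (l : ℕ) : R :=
  ∑ ij ∈ antidiagonal l, c ij.1 ij.2 • (x ^ ij.1 * y ^ ij.2)

theorem homogeneousSum_succ {c f g : ℕ → ℕ → ℕ}
    (h : ∀ i j, c (i + 1) (j + 1) = f (i + 1) j + g i (j + 1))
    (h₀ : ∀ j, c 0 (j + 1) = f 0 j) (h₀' : ∀ i, c (i + 1) 0 = g i 0) (x y : R) (l : ℕ) :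
    homogeneousSum c x y (l + 1) = y * homogeneousSum f x y l + x * homogeneousSum g x y l := by
  cases l with
  | zero =>
    simp only [homogeneousSum, Nat.sum_antidiagonal_succ, Nat.antidiagonal_zero, sum_singleton,
      h₀, h₀', nsmul_eq_mul]
    ring
  | succ l =>
    simp only [homogeneousSum]
    rw [Nat.sum_antidiagonal_succ', Nat.sum_antidiagonal_succ, Nat.sum_antidiagonal_succ,
      Nat.sum_antidiagonal_succ', mul_add, mul_add, mul_sum, mul_sum, h₀, h₀']
    simp only [h, add_smul, sum_add_distrib, nsmul_eq_mul]
    ring_nf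

lemma homogeneousSum_even_succ (x y : R) (l : ℕ) :
    homogeneousSum (fun i j ↦ lucasCoeff i (2 * j)) x y (l + 1) =
      y * homogeneousSum (fun i j ↦ lucasCoeff i (2 * j + 1)) x y l +
        x * homogeneousSum (fun i j ↦ lucasCoeff i (2 * j)) x y l :=
  homogeneousSum_succ (fun i j ↦ by simp only [mul_add, lucasCoeff_succ_succ i (2 * j + 1)])
    (fun j ↦ by simp only [mul_add, lucasCoeff_zero_succ])
    (fun i ↦ by simp only [mul_zero, lucasCoeff_zero_right]) x y l

lemma homogeneousSum_odd_succ (x y : R) (l : ℕ) :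
    homogeneousSum (fun i j ↦ lucasCoeff i (2 * j + 1)) x y (l + 1) =
      y * homogeneousSum (fun i j ↦ lucasCoeff i (2 * j + 1)) x y l +
        x * (homogeneousSum (fun i j ↦ lucasCoeff i (2 * j)) x y l +
          homogeneousSum (fun i j ↦ lucasCoeff i (2 * j + 1)) x y l) := by
  have hsum : homogeneousSum (fun i j ↦ lucasCoeff i (2 * j) + lucasCoeff i (2 * j + 1)) x y l =
      homogeneousSum (fun i j ↦ lucasCoeff i (2 * j)) x y l +
        homogeneousSum (fun i j ↦ lucasCoeff i (2 * j + 1)) x y l := by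
    simp only [homogeneousSum, add_smul, sum_add_distrib]
  rw [← hsum]
  exact homogeneousSum_succ (fun i j ↦ by simp only [mul_add, lucasCoeff_succ_succ]; ring)
    (fun j ↦ by simp only [mul_add, lucasCoeff_zero_succ])
    (fun i ↦ by simp only [mul_zero, lucasCoeff_succ_succ i 0, lucasCoeff_zero_right]) x y l

end HomogeneousSum

theorem pow_add_pow_and_pow_sub_pow_eq_homogeneousSum {R : Type*} [CommRing R] (u v : R) (l : ℕ) :
    u ^ (2 * l) + v ^ (2 * l) =
        homogeneousSum (fun i j ↦ lucasCoeff i (2 * j)) (u * v) ((u - v) ^ 2) l ∧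
      u ^ (2 * l + 1) - v ^ (2 * l + 1) =
        (u - v) * homogeneousSum (fun i j ↦ lucasCoeff i (2 * j + 1)) (u * v) ((u - v) ^ 2) l := by
  induction l with
  | zero =>
    norm_num [homogeneousSum, lucasCoeff_zero_right, lucasCoeff_zero_succ]
  | succ l ih =>
    obtain ⟨hE, hO⟩ := ih
    have hE' : u ^ (2 * (l + 1)) + v ^ (2 * (l + 1)) =
        (u - v) * (u ^ (2 * l + 1) - v ^ (2 * l + 1)) + u * v * (u ^ (2 * l) + v ^ (2 * l)) := by
      ring
    have hO' : u ^ (2 * (l + 1) + 1) - v ^ (2 * (l + 1) + 1) =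
        (u - v) * (u ^ (2 * (l + 1)) + v ^ (2 * (l + 1))) +
          u * v * (u ^ (2 * l + 1) - v ^ (2 * l + 1)) := by
      ring
    constructor
    · rw [hE', hO, hE, homogeneousSum_even_succ]
      ring
    · rw [hO', hE', hO, hE, homogeneousSum_odd_succ]
      ring

/-- The Girard–Waring identity: for commuting `u`, `v` and `l ≥ 0`,
`u^{2l+1} - v^{2l+1} = Σ_{j=0}^{l} a_{l,j} (uv)^{l-j} (u-v)^{2j+1}` where
`a_{l,j} = ((2l+1)/(2j+1))·C(l+j, 2j)`. -/
theorem girard_waring {R : Type*} [CommRing R] [Algebra ℚ R] (u v : R) (l : ℕ) :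
    u ^ (2 * l + 1) - v ^ (2 * l + 1) =
      ∑ j ∈ Finset.range (l + 1),
        (((2 * l + 1 : ℚ) / (2 * j + 1)) * ((l + j).choose (2 * j) : ℚ)) •
          ((u * v) ^ (l - j) * (u - v) ^ (2 * j + 1)) := by
  rw [(pow_add_pow_and_pow_sub_pow_eq_homogeneousSum u v l).2, homogeneousSum,
    ← Nat.sum_antidiagonal_swap, Nat.sum_antidiagonal_eq_sum_range_succ_mk, mul_sum]
  refine sum_congr rfl fun j hj ↦ ?_
  dsimp only [Prod.swap]
  rw [← cast_lucasCoeff_sub_eq (Nat.lt_succ_iff.mp (mem_range.mp hj)), Nat.cast_smul_eq_nsmul,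
    mul_smul_comm, pow_succ _ (2 * j), pow_mul]
  ring
end

section
/- For k ≥ 2, let r_k satisfy r_k = 1 + z(r_k^{k-1} + r_k^k), and let h = z·r_k^{2k-2}. Then B_h(z) = (4/(1-z))·U_{k-2}((1+z)/(1-z)), where U_n is the n-th Chebyshev polynomial of the second kind. In particular, for k=2 (large Schröder numbers), B_{z·r²}(z) = 4/(1-z). -/
open PowerSeries

/-! Write `s = z·r^{k-1}`. The defining equation says `r - 1 = s·(1 + r)`, so `s = (r - 1)/(r + 1)`
and substituting `g = z·h = s²` turns the argument `(1 + z)/(1 - z)` of `U_{k-2}` into the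
Joukowski point `(r + r⁻¹)/2`, where `U_n = (r^{n+1} - r^{-(n+1)})/(r - r⁻¹)`. Then `B_h(z·h)` collapses
to `(1 + r)(r^{2k-2} - 1)/((r - 1)·r^{k-1})`, and multiplying by `z·h` and using the defining
equation once more gives `z·(r^{2k-2} - 1) = h - z`. Denominators are cleared by cancelling the
nonzero series `r² - 1`. -/

lemma coeff_pow_eq_zero_of_lt {R : Type*} [CommRing R] {g : R⟦X⟧} (hg : constantCoeff g = 0)
    {n d : ℕ} (h : n < d) : coeff n (g ^ d) = 0 :=
  X_pow_dvd_iff.mp (pow_dvd_pow_of_dvd (X_dvd_iff.mpr hg) d) n h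

lemma comp_eq_substAlgHom {g : ℚ⟦X⟧} (hg : constantCoeff g = 0) (f : ℚ⟦X⟧) :
    comp f g = substAlgHom (HasSubst.of_constantCoeff_zero' hg) f := by
  ext n
  rw [coe_substAlgHom, coeff_subst' (HasSubst.of_constantCoeff_zero' hg),
    finsum_eq_sum_of_support_subset (s := Finset.range (n + 1))]
  · simp [comp, smul_eq_mul]
  · intro d hd
    contrapose! hd
    simp [coeff_pow_eq_zero_of_lt hg (by simpa using hd)]

namespace Polynomial.Chebyshev

variable {R : Type*} [CommRing R]

theorem U_eval_mul_sq_sub_one_mul_pow {x r : R} (hx : 2 * x * r = r ^ 2 + 1) (n : ℕ) :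
    (U R n).eval x * (r ^ 2 - 1) * r ^ n = r ^ (2 * n + 2) - 1 := by
  induction n using Nat.twoStepInduction with
  | zero => simp
  | one =>
    simp only [Nat.cast_one, U_one, eval_mul, eval_ofNat, eval_X]
    linear_combination (r ^ 2 - 1) * hx
  | more n ih₀ ih₁ =>
    push_cast at ih₁ ⊢
    rw [U_add_two]
    simp only [eval_sub, eval_mul, eval_ofNat, eval_X]
    linear_combination (2 * x * r) * ih₁ - r ^ 2 * ih₀ + (r ^ (2 * n + 4) - 1) * hx

end Polynomial.Chebyshev

section Joukowski

variable {R : Type*} [CommRing R] {r s v : R}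

lemma one_add_sq_eq_four_mul_mul (hr : r - 1 = s * (1 + r)) (hv : (1 - s ^ 2) * v = 1) :
    (1 + r) ^ 2 = 4 * r * v := by
  linear_combination -(1 + r) ^ 2 * hv + v * (r - 1 + s * (1 + r)) * hr

lemma two_mul_mul_eq_sq_add_one (hr : r - 1 = s * (1 + r)) (hv : (1 - s ^ 2) * v = 1) :
    2 * ((1 + s ^ 2) * v) * r = r ^ 2 + 1 := by
  linear_combination -2 * r * hv - one_add_sq_eq_four_mul_mul hr hv

end Joukowski

lemma sq_sub_one_ne_zero_of_sub_one_eq {R : Type*} [CommRing R] [IsDomain R] [CharZero R]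
    {r : R⟦X⟧} {m : ℕ} (hr : r - 1 = X * r ^ (m + 1) * (1 + r)) : r ^ 2 - 1 ≠ 0 := by
  have hr₀ : constantCoeff r = 1 := by
    simpa [sub_eq_zero] using congrArg constantCoeff hr
  have hfactor : r ^ 2 - 1 = X * (r ^ (m + 1) * (1 + r) ^ 2) := by
    linear_combination (1 + r) * hr
  rw [hfactor]
  refine mul_ne_zero X_ne_zero fun h => ?_
  have := congrArg constantCoeff h
  norm_num [hr₀] at this

/-- For `k ≥ 2`, let `r_k = 1 + z(r_k^{k-1} + r_k^k)` and `h = z·r_k^{2k-2}`.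
Then `B_h(z) = (4/(1-z))·U_{k-2}((1+z)/(1-z))`, where `U_n` is the `n`-th
Chebyshev polynomial of the second kind.  (For `k = 2`, the large Schröder
numbers, this gives `B_{z·r²}(z) = 4/(1-z)`.) -/
theorem generalized_schroeder_B (k : ℕ) (hk : 2 ≤ k) (r : PowerSeries ℚ)
    (hr : r = 1 + X * (r ^ (k - 1) + r ^ k)) :
    (X * r ^ (2 * k - 2)) - X =
      X * (X * r ^ (2 * k - 2)) *
        comp
          ((4 : PowerSeries ℚ) * (1 - X)⁻¹ *
            Polynomial.aeval ((1 + X) * (1 - X)⁻¹ : PowerSeries ℚ)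
              (Polynomial.Chebyshev.U ℚ ((k : ℤ) - 2)))
          (X * (X * r ^ (2 * k - 2))) := by
  obtain ⟨m, rfl⟩ : ∃ m, k = m + 2 := ⟨k - 2, by omega⟩
  rw [show m + 2 - 1 = m + 1 by omega] at hr
  rw [show 2 * (m + 2) - 2 = 2 * m + 2 by omega, show ((m + 2 : ℕ) : ℤ) - 2 = m by push_cast; ring]
  have hrs : r - 1 = X * r ^ (m + 1) * (1 + r) := by linear_combination hr
  have hg : constantCoeff ((X * r ^ (m + 1)) ^ 2) = 0 := by simp
  rw [show X * (X * r ^ (2 * m + 2)) = (X * r ^ (m + 1)) ^ 2 by ring, comp_eq_substAlgHom hg]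
  set φ : ℚ⟦X⟧ →ₐ[ℚ] ℚ⟦X⟧ := substAlgHom (HasSubst.of_constantCoeff_zero' hg)
  rw [map_mul, map_mul, ← Polynomial.aeval_algHom_apply, map_mul, map_add, map_one, substAlgHom_X,
    map_ofNat, Polynomial.Chebyshev.aeval_U]
  have hv : (1 - (X * r ^ (m + 1)) ^ 2) * φ (1 - X)⁻¹ = 1 := by
    have h := congrArg φ (PowerSeries.mul_inv_cancel (1 - X : ℚ⟦X⟧) (by simp))
    rwa [map_mul, map_sub, map_one, show φ X = (X * r ^ (m + 1)) ^ 2 from substAlgHom_X _] at h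
  have h4 := one_add_sq_eq_four_mul_mul hrs hv
  have hU := Polynomial.Chebyshev.U_eval_mul_sq_sub_one_mul_pow (two_mul_mul_eq_sq_add_one hrs hv) m
  apply mul_right_cancel₀ (sq_sub_one_ne_zero_of_sub_one_eq hrs)
  linear_combination X * (1 + r) * (r ^ (2 * m + 2) - 1) * hrs +
    X ^ 2 * r ^ (m + 1) * (r ^ (2 * m + 2) - 1) * h4 - 4 * X ^ 2 * r ^ (m + 2) * φ (1 - X)⁻¹ * hU
end

section
/- Let P_l(z) = Σ_{j=0}^{l} ((2l+1)/(2j+1))·C(l+j,2j)·z^j and p_k(z) = Σ_{j=0}^{k} d_{k,j}·z^j where d_{n,k} = ((n+1)/(k+1))·C(n+k+1, 2k+1). Then p_k = Σ_{l=0}^{k} P_l, and P_l(z)² = p_{2l}(z) for all l ≥ 0. -/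
open Polynomial

/-- `P_l(z) = Σ_{j=0}^{l} ((2l+1)/(2j+1))·C(l+j,2j)·z^j` (rows of A111125). -/
noncomputable def Ppoly (l : ℕ) : Polynomial ℚ :=
  ∑ j ∈ Finset.range (l + 1),
    Polynomial.C (((2 * l + 1 : ℚ) / (2 * j + 1)) * ((l + j).choose (2 * j) : ℚ)) *
      Polynomial.X ^ j

/-- `p_k(z) = Σ_{j=0}^{k} d_{k,j}·z^j` where
`d_{n,k} = ((n+1)/(k+1))·C(n+k+1, 2k+1)` (rows of A156308). -/
noncomputable def ppoly (k : ℕ) : Polynomial ℚ :=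
  ∑ j ∈ Finset.range (k + 1),
    Polynomial.C (((k + 1 : ℚ) / (j + 1)) * ((k + j + 1).choose (2 * j + 1) : ℚ)) *
      Polynomial.X ^ j

/-!
The coefficients of both families are sums of two binomial coefficients:
`[z^j] P_l = C(l+j+1, 2j+1) + C(l+j, 2j+1)` and `[z^j] p_k = C(k+j+2, 2j+2) + C(k+j+1, 2j+2)`.
Pascal's rule then gives `p_{k+1} = p_k + P_{k+1}` and the Chebyshev recurrence
`P_{l+2} + P_l = (z+2) P_{l+1}`, hence `p_{k+2} + p_k = (z+2) p_{k+1} + 2`. Together with the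
Cassini identity `P_{l+2} P_l = P_{l+1}^2 - (z+4)`, induction on `l` proves `P_l^2 = p_{2l}`
simultaneously with `P_{l+1} P_l = p_{2l+1} - 1`.
-/

theorem Polynomial.coeff_sum_range_C_mul_X_pow {R : Type*} [Semiring R] (f : ℕ → R) {n : ℕ}
    (hf : ∀ i, n < i → f i = 0) (i : ℕ) :
    (∑ j ∈ Finset.range (n + 1), C (f j) * X ^ j).coeff i = f i := by
  rw [finsetSum_coeff, Finset.sum_eq_single i]
  · simp
  · intro j _ hji
    simp [hji.symm]
  · intro hi
    rw [coeff_C_mul_X_pow, if_pos rfl, hf i (by simpa using hi)]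

theorem Nat.choose_succ_add_choose_mul (n k : ℕ) :
    ((n + 1).choose (k + 1) + n.choose (k + 1)) * (k + 1) = n.choose k * (2 * n - k + 1) := by
  rcases le_or_gt k n with hkn | hnk
  · rw [Nat.choose_succ_succ', add_mul, add_mul, Nat.choose_succ_right_eq,
      show 2 * n - k + 1 = (k + 1) + 2 * (n - k) by omega]
    ring
  · simp [Nat.choose_eq_zero_of_lt hnk, Nat.choose_eq_zero_of_lt (show n + 1 < k + 1 by omega),
      Nat.choose_eq_zero_of_lt (show n < k + 1 by omega)]

theorem Nat.choose_add_two_add_choose (n k : ℕ) :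
    (n + 2).choose (k + 2) + n.choose (k + 2) = n.choose k + 2 * (n + 1).choose (k + 2) := by
  simp only [Nat.choose_succ_succ']
  ring

theorem coeff_Ppoly (l j : ℕ) :
    (Ppoly l).coeff j = ((l + j + 1).choose (2 * j + 1) + (l + j).choose (2 * j + 1) : ℕ) := by
  rw [Ppoly, coeff_sum_range_C_mul_X_pow]
  · have key := Nat.choose_succ_add_choose_mul (l + j) (2 * j)
    rw [show 2 * (l + j) - 2 * j + 1 = 2 * l + 1 by omega] at key
    rw [div_mul_eq_mul_div, div_eq_iff (by positivity)]
    exact_mod_cast (key.trans (mul_comm _ _)).symm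
  · intro i hi
    rw [Nat.choose_eq_zero_of_lt (by omega), Nat.cast_zero, mul_zero]

theorem coeff_ppoly (k j : ℕ) :
    (ppoly k).coeff j = ((k + j + 2).choose (2 * j + 2) + (k + j + 1).choose (2 * j + 2) : ℕ) := by
  rw [ppoly, coeff_sum_range_C_mul_X_pow]
  · have key : ((k + j + 2).choose (2 * j + 2) + (k + j + 1).choose (2 * j + 2)) * (j + 1)
        = (k + j + 1).choose (2 * j + 1) * (k + 1) := by
      have := Nat.choose_succ_add_choose_mul (k + j + 1) (2 * j + 1)
      rw [show 2 * (k + j + 1) - (2 * j + 1) + 1 = 2 * (k + 1) by omega] at this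
      linarith
    rw [div_mul_eq_mul_div, div_eq_iff (by positivity)]
    exact_mod_cast (key.trans (mul_comm _ _)).symm
  · intro i hi
    rw [Nat.choose_eq_zero_of_lt (by omega), Nat.cast_zero, mul_zero]

theorem Ppoly_zero : Ppoly 0 = 1 := by
  simp [Ppoly]

theorem Ppoly_one : Ppoly 1 = X + 3 := by
  ext j
  rcases j with _ | _ | j
  · simp [coeff_Ppoly]
  · simp [coeff_Ppoly]
  · rw [coeff_Ppoly, Nat.choose_eq_zero_of_lt (by omega), Nat.choose_eq_zero_of_lt (by omega)]
    simp [coeff_X]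

theorem Ppoly_add_two (l : ℕ) : Ppoly (l + 2) + Ppoly l = (X + 2) * Ppoly (l + 1) := by
  ext j
  rcases j with _ | j
  · simp only [coeff_add, coeff_Ppoly, mul_coeff_zero, coeff_X_zero, coeff_ofNat_zero, add_zero,
      mul_zero, zero_add, Nat.choose_one_right]
    push_cast
    ring
  · have h₁ := Nat.choose_add_two_add_choose (l + j + 2) (2 * j + 1)
    have h₂ := Nat.choose_add_two_add_choose (l + j + 1) (2 * j + 1)
    simp only [coeff_add, add_mul, coeff_X_mul, coeff_Ppoly, ← C_ofNat, coeff_C_mul]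
    norm_cast
    ring_nf at h₁ h₂ ⊢
    omega

theorem Ppoly_two : Ppoly 2 = X ^ 2 + 5 * X + 5 := by
  linear_combination (Ppoly_add_two 0 : Ppoly 2 + Ppoly 0 = (X + 2) * Ppoly 1) - Ppoly_zero
    + (X + 2) * Ppoly_one

theorem ppoly_succ (k : ℕ) : ppoly (k + 1) = ppoly k + Ppoly (k + 1) := by
  ext j
  simp only [coeff_add, coeff_ppoly, coeff_Ppoly]
  have h₁ := Nat.choose_succ_succ' (k + j + 2) (2 * j + 1)
  have h₂ := Nat.choose_succ_succ' (k + j + 1) (2 * j + 1)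
  norm_cast
  ring_nf at h₁ h₂ ⊢
  omega

theorem ppoly_zero : ppoly 0 = 1 := by
  simp [ppoly]

theorem ppoly_eq_sum_Ppoly (k : ℕ) : ppoly k = ∑ l ∈ Finset.range (k + 1), Ppoly l := by
  induction k with
  | zero => simp [ppoly_zero, Ppoly_zero]
  | succ k ih => rw [Finset.sum_range_succ, ← ih, ppoly_succ]

theorem ppoly_one : ppoly 1 = X + 4 := by
  rw [ppoly_succ, ppoly_zero, Ppoly_one]
  ring

theorem ppoly_add_two (k : ℕ) : ppoly (k + 2) + ppoly k = (X + 2) * ppoly (k + 1) + 2 := by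
  induction k with
  | zero =>
    rw [show ppoly 2 = ppoly 1 + Ppoly 2 from ppoly_succ 1, ppoly_one, Ppoly_two, ppoly_zero]
    ring
  | succ k ih =>
    linear_combination ih + ppoly_succ (k + 2) + ppoly_succ k + Ppoly_add_two (k + 1)
      - (X + 2) * ppoly_succ (k + 1)

theorem cassini_of_add_two_eq {R : Type*} [CommRing R] {a : ℕ → R} {x : R}
    (ha : ∀ n, a (n + 2) + a n = x * a (n + 1)) (n : ℕ) :
    a (n + 2) * a n - a (n + 1) ^ 2 = a 2 * a 0 - a 1 ^ 2 := by
  induction n with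
  | zero => rfl
  | succ n ih => linear_combination ih + a (n + 1) * ha (n + 1) - a (n + 2) * ha n

theorem Ppoly_add_two_mul (l : ℕ) : Ppoly (l + 2) * Ppoly l = Ppoly (l + 1) ^ 2 - (X + 4) := by
  have h := cassini_of_add_two_eq Ppoly_add_two l
  rw [Ppoly_two, Ppoly_one, Ppoly_zero] at h
  linear_combination h

theorem sq_Ppoly_and_Ppoly_succ_mul (l : ℕ) :
    Ppoly l ^ 2 = ppoly (2 * l) ∧ Ppoly (l + 1) * Ppoly l = ppoly (2 * l + 1) - 1 := by
  induction l with
  | zero =>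
    rw [Ppoly_one, Ppoly_zero, ppoly_one, ppoly_zero]
    constructor <;> ring
  | succ l ih =>
    obtain ⟨hsq, hmul⟩ := ih
    have hsq' : Ppoly (l + 1) ^ 2 = ppoly (2 * l + 2) := by
      linear_combination -hsq + (X + 2) * hmul - Ppoly_add_two_mul l - ppoly_add_two (2 * l)
        + Ppoly l * Ppoly_add_two l
    refine ⟨hsq', ?_⟩
    linear_combination (X + 2) * hsq' - hmul + Ppoly (l + 1) * Ppoly_add_two l
      - ppoly_add_two (2 * l + 1)

/-- `p_k = Σ_{l=0}^{k} P_l`, and `P_l² = p_{2l}` for all `l ≥ 0`. -/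
theorem ppoly_Ppoly_relations :
    (∀ k : ℕ, ppoly k = ∑ l ∈ Finset.range (k + 1), Ppoly l) ∧
      ∀ l : ℕ, (Ppoly l) ^ 2 = ppoly (2 * l) :=
  ⟨ppoly_eq_sum_Ppoly, fun l => (sq_Ppoly_and_Ppoly_succ_mul l).1⟩
end

section
/- Extend the k-ary tree generating functions T_n = 1 + z·T_n^n to negative indices via the same functional equation. Then for all n ≥ 0, T_{-n}(z) = 1/T_{n+1}(-z). -/
open PowerSeries

/-!
Substituting `-z` into `T_{n+1} = 1 + z·T_{n+1}^{n+1}` shows that `C(z) = T_{n+1}(-z)` satisfies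
`C = 1 - z·C^{n+1}`; dividing by `C^{n+1}` turns this into `D^{n+1} = D^n + z` for `D = C⁻¹`,
the defining equation of `T_{-n}`. That equation has only one solution with constant term `1`:
the difference of two solutions `A`, `D` is annihilated by
`∑_{i ≤ n} A^i D^{n-i} - ∑_{i < n} A^i D^{n-1-i}`, whose constant term is `(n + 1) - n = 1`.
-/

theorem comp_C_mul_X (f : PowerSeries ℚ) (a : ℚ) : comp f (C a * X) = rescale a f := by
  ext n
  have hpow (i : ℕ) : coeff n ((C a * X) ^ i) = if n = i then a ^ i else 0 := by
    rw [mul_pow, ← map_pow, coeff_C_mul_X_pow]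
  simp only [comp, coeff_mk, coeff_rescale, hpow, mul_ite, mul_zero]
  rw [Finset.sum_ite_eq, if_pos (Finset.self_mem_range_succ n), mul_comm]

theorem comp_neg_X (f : PowerSeries ℚ) : comp f (-X) = rescale (-1) f := by
  rw [← comp_C_mul_X, map_neg, map_one, neg_one_mul]

theorem eq_of_pow_succ_eq_pow_add_X {R : Type*} [CommRing R] {n : ℕ} {A D : PowerSeries R}
    (hA0 : constantCoeff A = 1) (hD0 : constantCoeff D = 1)
    (hA : A ^ (n + 1) = A ^ n + X) (hD : D ^ (n + 1) = D ^ n + X) : A = D := by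
  set F := ∑ i ∈ Finset.range (n + 1), A ^ i * D ^ (n - i) -
    ∑ i ∈ Finset.range n, A ^ i * D ^ (n - 1 - i)
  have hF : F * (A - D) = 0 := by
    have hgeom := geom_sum₂_mul A D (n + 1)
    rw [Nat.add_sub_cancel] at hgeom
    rw [sub_mul, hgeom, geom_sum₂_mul, hA, hD]
    ring
  have hF0 : IsUnit (constantCoeff F) := by
    simp [F, map_sum, hA0, hD0]
  rw [← sub_eq_zero, ← (isUnit_iff_constantCoeff.mpr hF0).mul_right_eq_zero, hF]

theorem pow_succ_eq_pow_add_of_mul_eq_one {R : Type*} [CommRing R] {n : ℕ} {c d x : R}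
    (hcd : c * d = 1) (hc : c = 1 - x * c ^ (n + 1)) : d ^ (n + 1) = d ^ n + x := by
  have hcd_pow : c ^ (n + 1) * d ^ (n + 1) = 1 := by rw [← mul_pow, hcd, one_pow]
  linear_combination d ^ n * hcd - d ^ (n + 1) * hc + x * hcd_pow

/-- `A` is `T_{-n}`, its equation `A = 1 + z·A^{-n}` cleared of negative powers,
and `B` is `T_{n+1}`. -/
theorem negative_index_kary_trees (n : ℕ) (A B : PowerSeries ℚ)
    (hA0 : PowerSeries.constantCoeff A = 1)
    (hA : A ^ (n + 1) = A ^ n + X)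
    (hB : B = 1 + X * B ^ (n + 1)) :
    A = (comp B (-X))⁻¹ := by
  rw [comp_neg_X]
  have hC : rescale (-1) B = 1 - X * rescale (-1) B ^ (n + 1) := by
    conv_lhs => rw [hB]
    rw [map_add, map_one, map_mul, map_pow, rescale_neg_one_X, neg_mul, sub_eq_add_neg]
  set C := rescale (-1) B
  have hC0 : constantCoeff C = 1 := by
    rw [hC]
    simp
  refine eq_of_pow_succ_eq_pow_add_X hA0 (by rw [constantCoeff_inv, hC0, inv_one]) hA ?_
  exact pow_succ_eq_pow_add_of_mul_eq_one (PowerSeries.mul_inv_cancel C (by simp [hC0])) hC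
end
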